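/- Suppose W isolates a minimum-weight matching M_k of size k (i.e., M_k is the unique matching of size k of minimum weight), and M_{k+1} is a minimum-weight matching of size k+1. Then the symmetric difference M_k Δ M_{k+1} is a single augmenting path with respect to M_k. -/

import Mathlib

variable {V : Type*} [DecidableEq V]

/-- `M` is a matching in the graph with edge set `E`: a set of edges of `E`
such that no two distinct edges share a vertex. -/
def IsMatching (E M : Finset (Sym2 V)) : Prop :=
  M ⊆ E ∧ ∀ e ∈ M, ∀ f ∈ M, e ≠ f → ∀ v, v ∈ e → v ∉ f

/-- The list of edges of the path given by the vertex list `l`. -/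
def pathEdges (l : List V) : List (Sym2 V) :=
  (l.zip l.tail).map fun p => s(p.1, p.2)

/-- `l` is (the vertex list of) an augmenting path with respect to the matching `M` in the
graph with edge set `E`: a path (distinct vertices, consecutive pairs forming edges of `E`)
with an odd number of edges, alternating between edges outside `M` (the even-indexed, in
particular the first and last) and edges of `M` (the odd-indexed), whose two endpoints are
unmatched by `M`. -/
def IsAugPath (E M : Finset (Sym2 V)) (l : List V) : Prop :=
  2 ≤ l.length ∧ l.Nodup ∧
    (∀ e ∈ pathEdges l, e ∈ E) ∧
    (pathEdges l).length % 2 = 1 ∧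
    (∀ i (h : i < (pathEdges l).length), ((pathEdges l)[i] ∈ M ↔ i % 2 = 1)) ∧
    (∀ e ∈ M, (∀ a, l.head? = some a → a ∉ e) ∧ (∀ a, l.getLast? = some a → a ∉ e))

/-- The weight of a set of edges. -/
def wt (W : Sym2 V → ℤ) (F : Finset (Sym2 V)) : ℤ := ∑ e ∈ F, W e

/-- `W` isolates the matching `M` of size `k`: `M` is a matching of size `k` and every
other matching of size `k` has strictly larger weight. -/
def Isolates (W : Sym2 V → ℤ) (E : Finset (Sym2 V)) (k : ℕ) (M : Finset (Sym2 V)) : Prop :=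
  IsMatching E M ∧ M.card = k ∧
    ∀ M', IsMatching E M' → M'.card = k → M' ≠ M → wt W M < wt W M'

/-- `M` is a minimum-weight matching of size `j`. -/
def MinOfSize (W : Sym2 V → ℤ) (E : Finset (Sym2 V)) (j : ℕ) (M : Finset (Sym2 V)) : Prop :=
  IsMatching E M ∧ M.card = j ∧
    ∀ M', IsMatching E M' → M'.card = j → wt W M ≤ wt W M'

/-- The edge set `E` is bipartite with left part `L`. -/
def Bipartite (E : Finset (Sym2 V)) (L : Finset V) : Prop :=
  ∀ e ∈ E, ∃ u ∈ L, ∃ v, v ∉ L ∧ e = s(u, v)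

/-!
Exchanging a union `S` of connected components of `Mk ∆ Mk1` in both matchings preserves the
total weight, and preserves both sizes when `S` has as many edges of `Mk` as of `Mk1`. Minimality
of `Mk1` then makes `Mk ∆ S` a matching of size `k` and weight at most that of `Mk`, so `S = ∅`
by isolation. A longest alternating path starting at a vertex covered by `Mk1` but not by `Mk`
is such a union of components; it cannot be balanced, so it has an odd number of edges and ends
at a vertex not covered by `Mk`, and the rest of `Mk ∆ Mk1`, being balanced, is empty.
-/

section General

variable {α : Type*}

theorem Bipartite.not_isDiag {E : Finset (Sym2 α)} {L : Finset α}
    (h : Bipartite E L) {e : Sym2 α} (he : e ∈ E) : ¬ e.IsDiag := by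
  obtain ⟨u, hu, v, hv, rfl⟩ := h e he
  rw [Sym2.mk_isDiag_iff]
  rintro rfl
  exact hv hu

theorem IsMatching.eq_of_mem {E M : Finset (Sym2 α)} (hM : IsMatching E M)
    {e f : Sym2 α} (he : e ∈ M) (hf : f ∈ M) {v : α} (hve : v ∈ e) (hvf : v ∈ f) : e = f := by
  by_contra hne
  exact hM.2 e he f hf hne v hve hvf

theorem sdiff_eq_inter_of_subset_symmDiff [DecidableEq α] {s t u : Finset α}
    (h : u ⊆ symmDiff s t) : u \ s = u ∩ t := by
  ext x
  have := @h x
  simp only [Finset.mem_symmDiff, Finset.mem_sdiff, Finset.mem_inter] at this ⊢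
  tauto

theorem Finset.sum_symmDiff_add_sum_inter {β : Type*} [DecidableEq α] [AddCommMonoid β]
    (f : α → β) (s t : Finset α) :
    ∑ x ∈ symmDiff s t, f x + ∑ x ∈ t ∩ s, f x = ∑ x ∈ s, f x + ∑ x ∈ t \ s, f x := by
  rw [symmDiff_def, Finset.sup_eq_union, Finset.sum_union disjoint_sdiff_sdiff,
    add_right_comm, Finset.inter_comm, add_comm (∑ x ∈ s \ t, f x),
    Finset.sum_inter_add_sum_sdiff]

theorem Finset.card_symmDiff_add_card_inter [DecidableEq α] (s t : Finset α) :
    (symmDiff s t).card + (t ∩ s).card = s.card + (t \ s).card := by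
  simp only [Finset.card_eq_sum_ones]
  exact Finset.sum_symmDiff_add_sum_inter _ s t

theorem length_filter_of_getElem_iff_odd (p : α → Bool) :
    ∀ l : List α, (∀ i (h : i < l.length), p l[i] ↔ i % 2 = 1) →
      (l.filter p).length = l.length / 2
  | [], _ => by simp
  | [a], h => by
    have ha := h 0 (by simp)
    simp only [List.getElem_cons_zero, Nat.zero_mod, zero_ne_one, iff_false] at ha
    simp [ha]
  | a :: b :: l, h => by
    have ha := h 0 (by simp)
    have hb := h 1 (by simp)
    have hl := length_filter_of_getElem_iff_odd p l fun i hi => by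
      have := h (i + 1 + 1) (by simp only [List.length_cons]; omega)
      simp only [List.getElem_cons_succ] at this
      rw [this]
      omega
    simp only [List.getElem_cons_zero, List.getElem_cons_succ] at ha hb
    simp only [List.filter_cons, ha, hb, Nat.zero_mod, zero_ne_one, ↓reduceIte,
      List.length_cons]
    omega

@[simp]
theorem length_pathEdges (l : List α) : (pathEdges l).length = l.length - 1 := by
  simp [pathEdges]

theorem getElem_pathEdges (l : List α) (i : ℕ) (h : i < (pathEdges l).length) :
    (pathEdges l)[i] = s(l[i]'(by rw [length_pathEdges] at h; omega), l[i + 1]'(by rw [length_pathEdges] at h; omega)) := by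
  simp [pathEdges]

theorem getElem_mem_getElem_pathEdges_iff {l : List α} (hl : l.Nodup) {i j : ℕ}
    (hi : i < (pathEdges l).length) (hj : j < l.length) :
    l[j] ∈ (pathEdges l)[i] ↔ j = i ∨ j = i + 1 := by
  rw [getElem_pathEdges, Sym2.mem_iff, hl.getElem_inj_iff, hl.getElem_inj_iff]

theorem nodup_pathEdges {l : List α} (hl : l.Nodup) : (pathEdges l).Nodup := by
  rw [List.nodup_iff_injective_getElem]
  rintro ⟨i, hi⟩ ⟨j, hj⟩ hij
  simp only [getElem_pathEdges, Sym2.eq_iff, hl.getElem_inj_iff] at hij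
  simp only [Fin.mk.injEq]
  omega

theorem pathEdges_concat (l : List α) (hl : l ≠ []) (w : α) :
    pathEdges (l ++ [w]) = pathEdges l ++ [s(l.getLast hl, w)] := by
  induction l with
  | nil => contradiction
  | cons a l ih =>
    cases l with
    | nil => simp [pathEdges]
    | cons b l =>
      have h : ∀ l' : List α, pathEdges (a :: b :: l') = s(a, b) :: pathEdges (b :: l') := by
        simp [pathEdges]
      rw [List.cons_append, List.cons_append, h, ← List.cons_append, ih (List.cons_ne_nil _ _),
        h, List.getLast_cons (List.cons_ne_nil _ _)]
      rfl

end General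

section Matchings

variable {E M N S : Finset (Sym2 V)}

theorem IsMatching.mem_of_mem_symmDiff (hM : IsMatching E M) (hN : IsMatching E N)
    {e : Sym2 V} (he : e ∈ symmDiff M N) : e ∈ E := by
  rcases Finset.mem_symmDiff.1 he with ⟨he, -⟩ | ⟨he, -⟩
  exacts [hM.1 he, hN.1 he]

theorem IsMatching.card_biUnion_toFinset (hE : ∀ e ∈ E, ¬ e.IsDiag) (hM : IsMatching E M) :
    (M.biUnion Sym2.toFinset).card = 2 * M.card := by
  rw [Finset.card_biUnion, Finset.sum_congr rfl
    (fun e he => Sym2.card_toFinset_of_not_isDiag e (hE e (hM.1 he))), Finset.sum_const,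
    smul_eq_mul, mul_comm]
  intro e he f hf hef
  exact Finset.disjoint_left.2 fun v hve hvf =>
    hM.2 e he f hf hef v (Sym2.mem_toFinset.1 hve) (Sym2.mem_toFinset.1 hvf)

theorem exists_unmatched_of_card_lt (hE : ∀ e ∈ E, ¬ e.IsDiag) (hM : IsMatching E M)
    (hN : IsMatching E N) (hMN : M.card < N.card) :
    ∃ v, (∀ e ∈ M, v ∉ e) ∧ ∃ f ∈ N, v ∈ f := by
  have hsub : ¬ N.biUnion Sym2.toFinset ⊆ M.biUnion Sym2.toFinset := fun h => by
    have := Finset.card_le_card h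
    rw [hN.card_biUnion_toFinset hE, hM.card_biUnion_toFinset hE] at this
    omega
  obtain ⟨v, hvN, hvM⟩ := Finset.not_subset.1 hsub
  simp only [Finset.mem_biUnion, Sym2.mem_toFinset, not_exists, not_and] at hvN hvM
  exact ⟨v, hvM, hvN⟩

def IsUnionOfComponents (D S : Finset (Sym2 V)) : Prop :=
  S ⊆ D ∧ ∀ e ∈ D, ∀ f ∈ S, ∀ v ∈ e, v ∈ f → e ∈ S

theorem IsUnionOfComponents.sdiff {D : Finset (Sym2 V)} (h : IsUnionOfComponents D S) :
    IsUnionOfComponents D (D \ S) := by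
  refine ⟨Finset.sdiff_subset, fun e he f hf v hve hvf => Finset.mem_sdiff.2 ⟨he, fun heS => ?_⟩⟩
  exact (Finset.mem_sdiff.1 hf).2 (h.2 f (Finset.mem_sdiff.1 hf).1 e heS v hvf hve)

theorem IsMatching.symmDiff_of_isUnionOfComponents (hM : IsMatching E M) (hN : IsMatching E N)
    (hS : IsUnionOfComponents (symmDiff M N) S) : IsMatching E (symmDiff M S) := by
  have hSN : S \ M ⊆ N := by
    rw [sdiff_eq_inter_of_subset_symmDiff hS.1]
    exact Finset.inter_subset_right
  have cross : ∀ e ∈ M, e ∉ S → ∀ f ∈ S, f ∉ M → ∀ v ∈ e, v ∉ f := by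
    intro e heM heS f hfS hfM v hve hvf
    by_cases heN : e ∈ N
    · exact hN.2 e heN f (hSN (Finset.mem_sdiff.2 ⟨hfS, hfM⟩)) (by rintro rfl; exact heS hfS)
        v hve hvf
    · exact heS (hS.2 e (Finset.mem_symmDiff.2 (Or.inl ⟨heM, heN⟩)) f hfS v hve hvf)
  refine ⟨fun e he => ?_, fun e he f hf hne v hve hvf => ?_⟩
  · rcases Finset.mem_symmDiff.1 he with ⟨heM, -⟩ | ⟨heS, heM⟩
    exacts [hM.1 heM, hN.1 (hSN (Finset.mem_sdiff.2 ⟨heS, heM⟩))]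
  rcases Finset.mem_symmDiff.1 he with ⟨heM, heS⟩ | ⟨heS, heM⟩ <;>
    rcases Finset.mem_symmDiff.1 hf with ⟨hfM, hfS⟩ | ⟨hfS, hfM⟩
  · exact hM.2 e heM f hfM hne v hve hvf
  · exact cross e heM heS f hfS hfM v hve hvf
  · exact cross f hfM hfS e heS heM v hvf hve
  · exact hN.2 e (hSN (Finset.mem_sdiff.2 ⟨heS, heM⟩)) f (hSN (Finset.mem_sdiff.2 ⟨hfS, hfM⟩))
      hne v hve hvf

end Matchings

section Exchange

variable {W : Sym2 V → ℤ} {E Mk Mk1 S : Finset (Sym2 V)} {k : ℕ}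

theorem wt_symmDiff_add_wt_inter (s t : Finset (Sym2 V)) :
    wt W (symmDiff s t) + wt W (t ∩ s) = wt W s + wt W (t \ s) :=
  Finset.sum_symmDiff_add_sum_inter W s t

theorem eq_empty_of_card_inter_eq (hMk : Isolates W E k Mk) (hMk1 : MinOfSize W E (k + 1) Mk1)
    (hS : IsUnionOfComponents (symmDiff Mk Mk1) S) (hbal : (S ∩ Mk).card = (S ∩ Mk1).card) :
    S = ∅ := by
  have hS' : IsUnionOfComponents (symmDiff Mk1 Mk) S := by rwa [symmDiff_comm]
  have hSMk : S \ Mk = S ∩ Mk1 := sdiff_eq_inter_of_subset_symmDiff hS.1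
  have hSMk1 : S \ Mk1 = S ∩ Mk := sdiff_eq_inter_of_subset_symmDiff hS'.1
  have hk := hMk.2.1
  have hk1 := hMk1.2.1
  have hc := Finset.card_symmDiff_add_card_inter Mk S
  have hc' := Finset.card_symmDiff_add_card_inter Mk1 S
  have hw := wt_symmDiff_add_wt_inter (W := W) Mk S
  have hw' := wt_symmDiff_add_wt_inter (W := W) Mk1 S
  rw [hSMk] at hc hw
  rw [hSMk1] at hc' hw'
  have hle : wt W Mk1 ≤ wt W (symmDiff Mk1 S) :=
    hMk1.2.2 _ (hMk1.1.symmDiff_of_isUnionOfComponents hMk.1 hS') (by omega)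
  by_contra hne
  have hlt : wt W Mk < wt W (symmDiff Mk S) :=
    hMk.2.2 _ (hMk.1.symmDiff_of_isUnionOfComponents hMk1.1 hS) (by omega)
      (fun h => hne (symmDiff_eq_left.1 h))
  omega

theorem eq_symmDiff_of_card_inter_eq_succ (hMk : Isolates W E k Mk)
    (hMk1 : MinOfSize W E (k + 1) Mk1) (hS : IsUnionOfComponents (symmDiff Mk Mk1) S)
    (hcard : (S ∩ Mk1).card = (S ∩ Mk).card + 1) : S = symmDiff Mk Mk1 := by
  have hcount : ∀ X, ((symmDiff Mk Mk1 \ S) ∩ X).card + (S ∩ X).card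
      = (symmDiff Mk Mk1 ∩ X).card := fun X => by
    rw [← Finset.inf_eq_inter, inf_sdiff_distrib_right]
    exact Finset.card_sdiff_add_card_eq_card (Finset.inter_subset_inter_right hS.1)
  have hDMk : symmDiff Mk Mk1 ∩ Mk = Mk \ Mk1 := by
    ext; simp only [Finset.mem_inter, Finset.mem_symmDiff, Finset.mem_sdiff]; tauto
  have hDMk1 : symmDiff Mk Mk1 ∩ Mk1 = Mk1 \ Mk := by
    ext; simp only [Finset.mem_inter, Finset.mem_symmDiff, Finset.mem_sdiff]; tauto
  have h1 := hcount Mk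
  have h2 := hcount Mk1
  have h3 := Finset.card_sdiff_add_card_inter Mk Mk1
  have h4 := Finset.card_sdiff_add_card_inter Mk1 Mk
  rw [Finset.inter_comm Mk1 Mk, hMk1.2.1] at h4
  rw [hMk.2.1] at h3
  rw [hDMk] at h1
  rw [hDMk1] at h2
  have hempty := eq_empty_of_card_inter_eq hMk hMk1 hS.sdiff (by omega)
  exact subset_antisymm hS.1 (Finset.sdiff_eq_empty_iff_subset.1 hempty)

end Exchange

structure IsAltPath (M N : Finset (Sym2 V)) (l : List V) : Prop where
  nodup : l.Nodup
  head_not_mem : ∀ e ∈ M, ∀ h : 0 < l.length, l[0] ∉ e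
  getElem_mem_symmDiff : ∀ i (h : i < (pathEdges l).length), (pathEdges l)[i] ∈ symmDiff M N
  getElem_mem_left_iff : ∀ i (h : i < (pathEdges l).length), (pathEdges l)[i] ∈ M ↔ i % 2 = 1

namespace IsAltPath

variable {E M N : Finset (Sym2 V)} {l : List V}

theorem singleton {v : V} (hv : ∀ e ∈ M, v ∉ e) : IsAltPath M N [v] :=
  ⟨List.nodup_singleton v, fun e he _ => hv e he, fun i h => by simp [pathEdges] at h,
    fun i h => by simp [pathEdges] at h⟩

theorem getElem_mem_right_iff (hl : IsAltPath M N l) {i : ℕ} (h : i < (pathEdges l).length) :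
    (pathEdges l)[i] ∈ N ↔ i % 2 = 0 := by
  have hD := Finset.mem_symmDiff.1 (hl.getElem_mem_symmDiff i h)
  rw [show i % 2 = 0 ↔ ¬ i % 2 = 1 by omega, ← hl.getElem_mem_left_iff i h]
  tauto

theorem toFinset_subset (hl : IsAltPath M N l) : (pathEdges l).toFinset ⊆ symmDiff M N := by
  intro e he
  obtain ⟨i, hi, rfl⟩ := List.getElem_of_mem (List.mem_toFinset.1 he)
  exact hl.getElem_mem_symmDiff i hi

theorem card_inter_left (hl : IsAltPath M N l) :
    ((pathEdges l).toFinset ∩ M).card = (l.length - 1) / 2 := by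
  have : (pathEdges l).toFinset ∩ M = ((pathEdges l).filter (· ∈ M)).toFinset := by
    ext; simp
  rw [this, List.toFinset_card_of_nodup ((nodup_pathEdges hl.nodup).filter _),
    length_filter_of_getElem_iff_odd _ _ fun i h => by simpa using hl.getElem_mem_left_iff i h,
    length_pathEdges]

theorem card_inter_right (hl : IsAltPath M N l) :
    ((pathEdges l).toFinset ∩ N).card = (l.length - 1) - (l.length - 1) / 2 := by
  have h := Finset.card_sdiff_add_card_inter (pathEdges l).toFinset M
  rw [sdiff_eq_inter_of_subset_symmDiff hl.toFinset_subset, hl.card_inter_left,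
    List.toFinset_card_of_nodup (nodup_pathEdges hl.nodup), length_pathEdges] at h
  omega

theorem mem_pathEdges_of_mem_symmDiff (hM : IsMatching E M) (hN : IsMatching E N)
    (hl : IsAltPath M N l) {j : ℕ} (hj : j + 1 < l.length) {f : Sym2 V}
    (hf : f ∈ symmDiff M N) (hv : l[j] ∈ f) : f ∈ pathEdges l := by
  have key : ∀ X, IsMatching E X → f ∈ X → ∀ i (hi : i < (pathEdges l).length),
      (pathEdges l)[i] ∈ X → (j = i ∨ j = i + 1) → f ∈ pathEdges l := by
    intro X hX hfX i hi hiX hji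
    rw [hX.eq_of_mem hfX hiX hv ((getElem_mem_getElem_pathEdges_iff hl.nodup hi _).2 hji)]
    exact List.getElem_mem hi
  have hlen := length_pathEdges l
  -- `l[j]` lies on the path edges `j - 1` and `j`; pick the one of the same parity as `f`.
  rcases Finset.mem_symmDiff.1 hf with ⟨hfM, -⟩ | ⟨hfN, -⟩
  · have hj0 : j ≠ 0 := by
      rintro rfl
      exact hl.head_not_mem f hfM (by omega) hv
    exact key M hM hfM (j - 1 + j % 2) (by omega) ((hl.getElem_mem_left_iff _ _).2 (by omega)) (by omega)
  · exact key N hN hfN (j - j % 2) (by omega) ((hl.getElem_mem_right_iff _).2 (by omega))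
      (by omega)

theorem mem_left_iff_of_getLast_mem (hM : IsMatching E M) (hN : IsMatching E N)
    (hl : IsAltPath M N l) (hne : l ≠ []) {g : Sym2 V} (hg : g ∈ symmDiff M N)
    (hgl : g ∉ pathEdges l) (hv : l.getLast hne ∈ g) :
    g ∈ M ↔ (pathEdges l).length % 2 = 1 := by
  rw [List.getLast_eq_getElem] at hv
  have hlen := length_pathEdges l
  by_cases ht : (pathEdges l).length = 0
  · have hl1 : l.length - 1 = 0 := by omega
    simp only [hl1] at hv
    simp only [ht, Nat.zero_mod, zero_ne_one, iff_false]
    exact fun hgM => hl.head_not_mem g hgM _ hv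
  -- `g` and the last path edge share the last vertex but differ, so they lie in different
  -- matchings.
  have hi : (pathEdges l).length - 1 < (pathEdges l).length := by omega
  have hvi := (getElem_mem_getElem_pathEdges_iff hl.nodup hi (j := l.length - 1) (by omega)).2
    (Or.inr (by omega))
  have hne' : g ≠ (pathEdges l)[(pathEdges l).length - 1] :=
    fun h => hgl (h ▸ List.getElem_mem hi)
  constructor
  · intro hgM
    by_contra hodd
    exact hne' (hM.eq_of_mem hgM ((hl.getElem_mem_left_iff _ hi).2 (by omega)) hv hvi)
  · intro hodd
    by_contra hgM
    have hgN : g ∈ N := by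
      rcases Finset.mem_symmDiff.1 hg with h | h
      exacts [absurd h.1 hgM, h.1]
    exact hne' (hN.eq_of_mem hgN ((hl.getElem_mem_right_iff hi).2 (by omega)) hv hvi)

theorem concat (hE : ∀ e ∈ E, ¬ e.IsDiag) (hM : IsMatching E M) (hN : IsMatching E N)
    (hl : IsAltPath M N l) (hne : l ≠ []) {g : Sym2 V} (hg : g ∈ symmDiff M N)
    (hgl : g ∉ pathEdges l) (hv : l.getLast hne ∈ g) : ∃ w, IsAltPath M N (l ++ [w]) := by
  obtain ⟨w, hgw, hwne⟩ : ∃ w, s(l.getLast hne, w) = g ∧ w ≠ l.getLast hne :=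
    ⟨_, Sym2.other_spec hv, Sym2.other_ne (hE g (hM.mem_of_mem_symmDiff hN hg)) hv⟩
  have hlen : 0 < l.length := List.length_pos_iff.2 hne
  have hwl : w ∉ l := by
    intro hw
    obtain ⟨j, hj, rfl⟩ := List.getElem_of_mem hw
    have hjt : j + 1 < l.length := by
      by_contra hjt
      apply hwne
      rw [List.getLast_eq_getElem]
      congr 1
      omega
    exact hgl (hl.mem_pathEdges_of_mem_symmDiff hM hN hjt hg (hgw ▸ Sym2.mem_mk_right _ _))
  have hP : pathEdges (l ++ [w]) = pathEdges l ++ [g] := by rw [pathEdges_concat l hne, hgw]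
  have hedges : ∀ i (hi : i < (pathEdges (l ++ [w])).length),
      (pathEdges (l ++ [w]))[i] ∈ symmDiff M N ∧ ((pathEdges (l ++ [w]))[i] ∈ M ↔ i % 2 = 1) := by
    intro i hi
    rw [List.getElem_of_eq hP hi, List.getElem_append]
    split_ifs with h
    · exact ⟨hl.getElem_mem_symmDiff i h, hl.getElem_mem_left_iff i h⟩
    · have : i = (pathEdges l).length := by
        have hi' := hi
        rw [hP, List.length_append, List.length_singleton] at hi'
        omega
      subst this
      simp only [Nat.sub_self, List.getElem_singleton]
      exact ⟨hg, hl.mem_left_iff_of_getLast_mem hM hN hne hg hgl hv⟩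
  refine ⟨w, ?_, fun e he h => ?_, fun i hi => (hedges i hi).1, fun i hi => (hedges i hi).2⟩
  · rw [← List.concat_eq_append]
    exact hl.nodup.concat hwl
  · rw [List.getElem_append_left hlen]
    exact hl.head_not_mem e he hlen

theorem exists_maximal (hl : IsAltPath M N l) :
    ∃ l', IsAltPath M N l' ∧ l.length ≤ l'.length ∧ ∀ w, ¬ IsAltPath M N (l' ++ [w]) := by
  have hbound : ∀ l', IsAltPath M N l' → l'.length ≤ (symmDiff M N).card + 1 := fun l' hl' => by
    have := Finset.card_le_card hl'.toFinset_subset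
    rw [List.toFinset_card_of_nodup (nodup_pathEdges hl'.nodup), length_pathEdges] at this
    omega
  set S : Set ℕ := {n | ∃ l', IsAltPath M N l' ∧ l'.length = n}
  have hS : BddAbove S := by
    refine ⟨(symmDiff M N).card + 1, ?_⟩
    rintro _ ⟨l', hl', rfl⟩
    exact hbound l' hl'
  obtain ⟨l', hl', hlen⟩ := Nat.sSup_mem (s := S) ⟨l.length, l, hl, rfl⟩ hS
  refine ⟨l', hl', hlen ▸ le_csSup hS ⟨l, hl, rfl⟩, fun w hw => ?_⟩
  have := le_csSup hS ⟨_, hw, rfl⟩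
  simp only [List.length_append, List.length_singleton] at this
  omega

theorem mem_pathEdges_of_maximal (hE : ∀ e ∈ E, ¬ e.IsDiag) (hM : IsMatching E M)
    (hN : IsMatching E N) (hl : IsAltPath M N l) (hne : l ≠ [])
    (hmax : ∀ w, ¬ IsAltPath M N (l ++ [w])) :
    ∀ g ∈ symmDiff M N, l.getLast hne ∈ g → g ∈ pathEdges l := by
  intro g hg hv
  by_contra hgl
  obtain ⟨w, hw⟩ := hl.concat hE hM hN hne hg hgl hv
  exact hmax w hw

theorem isUnionOfComponents (hM : IsMatching E M) (hN : IsMatching E N) (hl : IsAltPath M N l)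
    (hne : l ≠ []) (hlast : ∀ g ∈ symmDiff M N, l.getLast hne ∈ g → g ∈ pathEdges l) :
    IsUnionOfComponents (symmDiff M N) (pathEdges l).toFinset := by
  refine ⟨hl.toFinset_subset, fun e he f hf v hve hvf => List.mem_toFinset.2 ?_⟩
  obtain ⟨i, hi, rfl⟩ := List.getElem_of_mem (List.mem_toFinset.1 hf)
  rw [getElem_pathEdges, Sym2.mem_iff] at hvf
  have hlen := length_pathEdges l
  rcases hvf with rfl | rfl
  · exact hl.mem_pathEdges_of_mem_symmDiff hM hN (by omega) he hve
  · by_cases hi2 : i + 2 < l.length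
    · exact hl.mem_pathEdges_of_mem_symmDiff hM hN hi2 he hve
    · refine hlast e he ?_
      rw [List.getLast_eq_getElem]
      convert hve using 2
      omega

theorem getLast_not_mem_left (hN : IsMatching E N) (hl : IsAltPath M N l) (hne : l ≠ [])
    (hlast : ∀ g ∈ symmDiff M N, l.getLast hne ∈ g → g ∈ pathEdges l)
    (ht : (l.length - 1) % 2 = 1) : ∀ e ∈ M, l.getLast hne ∉ e := by
  intro e heM hv
  have hlen := length_pathEdges l
  have hi : l.length - 2 < (pathEdges l).length := by omega
  have hvi : l.getLast hne ∈ (pathEdges l)[l.length - 2] := by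
    rw [List.getLast_eq_getElem]
    exact (getElem_mem_getElem_pathEdges_iff hl.nodup hi _).2 (Or.inr (by omega))
  by_cases heN : e ∈ N
  · have := hN.eq_of_mem heN ((hl.getElem_mem_right_iff hi).2 (by omega)) hv hvi
    have := (hl.getElem_mem_left_iff _ hi).1 (this ▸ heM)
    omega
  · obtain ⟨m, hm, rfl⟩ :=
      List.getElem_of_mem (hlast e (Finset.mem_symmDiff.2 (Or.inl ⟨heM, heN⟩)) hv)
    rw [List.getLast_eq_getElem, getElem_mem_getElem_pathEdges_iff hl.nodup hm] at hv
    have := (hl.getElem_mem_left_iff m hm).1 heM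
    omega

theorem isAugPath (hM : IsMatching E M) (hN : IsMatching E N) (hl : IsAltPath M N l)
    (hne : l ≠ []) (hlast : ∀ g ∈ symmDiff M N, l.getLast hne ∈ g → g ∈ pathEdges l)
    (ht : (l.length - 1) % 2 = 1) : IsAugPath E M l := by
  have hlen := length_pathEdges l
  refine ⟨by omega, hl.nodup, fun e he => ?_, by omega, hl.getElem_mem_left_iff,
    fun e he => ⟨fun a ha => ?_, fun a ha => ?_⟩⟩
  · exact hM.mem_of_mem_symmDiff hN (hl.toFinset_subset (List.mem_toFinset.2 he))
  · rw [List.head?_eq_getElem?, List.getElem?_eq_getElem (by omega)] at ha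
    exact Option.some_injective _ ha ▸ hl.head_not_mem e he _
  · rw [List.getLast?_eq_some_getLast hne] at ha
    exact Option.some_injective _ ha ▸ hl.getLast_not_mem_left hN hne hlast ht e he

end IsAltPath

/-- If `W` isolates the minimum-weight matching `Mk` of size `k` in a bipartite graph and
`Mk1` is a minimum-weight matching of size `k+1`, then the symmetric difference
`Mk Δ Mk1` is a single augmenting path with respect to `Mk`. -/
theorem symmDiff_is_single_augPath (E : Finset (Sym2 V)) (L : Finset V)
    (hbip : Bipartite E L) (W : Sym2 V → ℤ) (k : ℕ) (Mk Mk1 : Finset (Sym2 V))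
    (hMk : Isolates W E k Mk) (hMk1 : MinOfSize W E (k + 1) Mk1) :
    ∃ l : List V, IsAugPath E Mk l ∧ (pathEdges l).toFinset = symmDiff Mk Mk1 := by
  have hE : ∀ e ∈ E, ¬ e.IsDiag := fun e he => hbip.not_isDiag he
  obtain ⟨v, hv, f, hf, hvf⟩ :=
    exists_unmatched_of_card_lt hE hMk.1 hMk1.1 (by rw [hMk.2.1, hMk1.2.1]; omega)
  obtain ⟨w, h₀⟩ := (IsAltPath.singleton (N := Mk1) hv).concat hE hMk.1 hMk1.1
    (List.cons_ne_nil v []) (Finset.mem_symmDiff.2 (Or.inr ⟨hf, fun h => hv f h hvf⟩))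
    (by simp [pathEdges]) hvf
  obtain ⟨l, hl, hlen, hmax⟩ := h₀.exists_maximal
  simp only [List.length_append, List.length_singleton] at hlen
  have hne : l ≠ [] := List.ne_nil_of_length_pos (by omega)
  have hlast := hl.mem_pathEdges_of_maximal hE hMk.1 hMk1.1 hne hmax
  have hP := hl.isUnionOfComponents hMk.1 hMk1.1 hne hlast
  have hcard := hl.card_inter_left
  have hcard1 := hl.card_inter_right
  have ht : (l.length - 1) % 2 = 1 := by
    by_contra ht
    have hempty := eq_empty_of_card_inter_eq hMk hMk1 hP (by omega)
    rw [hempty, Finset.empty_inter, Finset.card_empty] at hcard1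
    omega
  exact ⟨l, hl.isAugPath hMk.1 hMk1.1 hne hlast ht,
    eq_symmDiff_of_card_inter_eq_succ hMk hMk1 hP (by omega)⟩
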